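/- Let (Ω_1,...,Ω_N) be an equivolume measurable partition of [0,1]^d (each |Ω_i| = 1/N), let q_i(x) = N|Ω_i ∩ [0,x]|, and let P_Ω be the associated stratified sample (one independent uniform point per Ω_i). Then E L2(P_Ω)^2 = (1/N^2) ∑_{i=1}^N ∫_{[0,1]^d} q_i(x)(1 − q_i(x)) dx. -/

import Mathlib

open MeasureTheory Set
open scoped ENNReal

/-- The half-open box `[0,x) = ∏_j [0, x_j)`. -/
def box (d : ℕ) (x : Fin d → ℝ) : Set (Fin d → ℝ) :=
  Set.univ.pi fun j => Set.Ico 0 (x j)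

/-- The squared `L2`-discrepancy of the point set `P` in `[0,1]^d`. -/
noncomputable def disc2 (d N : ℕ) (P : Fin N → Fin d → ℝ) : ℝ :=
  ∫ x in Set.Icc (0 : Fin d → ℝ) 1,
    ((Set.ncard {i | P i ∈ box d x} : ℝ) / N - (volume (box d x)).toReal) ^ 2

/-- The uniform probability measure on a set `Ω` (normalized Lebesgue measure). -/
noncomputable def unif {d : ℕ} (Ω : Set (Fin d → ℝ)) : Measure (Fin d → ℝ) :=
  (volume Ω)⁻¹ • volume.restrict Ω

lemma box_meas (d : ℕ) (x : Fin d → ℝ) : MeasurableSet (box d x) :=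
  MeasurableSet.univ_pi fun _ => measurableSet_Ico

lemma box_subset_Icc (d : ℕ) (x : Fin d → ℝ) : box d x ⊆ Set.Icc 0 x := by
  intro y hy
  simp only [box, Set.mem_pi, Set.mem_univ, forall_true_left, Set.mem_Ico] at hy
  exact ⟨fun j => (hy j).1, fun j => (hy j).2.le⟩

lemma box_subset_unit {d : ℕ} {x : Fin d → ℝ} (hx : x ∈ Set.Icc (0 : Fin d → ℝ) 1) :
    box d x ⊆ Set.Icc 0 1 := by
  refine (box_subset_Icc d x).trans ?_
  exact Set.Icc_subset_Icc le_rfl hx.2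

lemma null_diff (d : ℕ) (x : Fin d → ℝ) :
    volume (Set.Icc (0 : Fin d → ℝ) x \ box d x) = 0 := by
  have hsub : Set.Icc (0 : Fin d → ℝ) x \ box d x ⊆ ⋃ j, {y : Fin d → ℝ | y j = x j} := by
    intro y ⟨hy1, hy2⟩
    simp only [box, Set.mem_pi, Set.mem_univ, forall_true_left, Set.mem_Ico, not_forall] at hy2
    obtain ⟨j, hj⟩ := hy2
    have h0 : 0 ≤ y j := hy1.1 j
    have h1 : y j ≤ x j := hy1.2 j
    refine Set.mem_iUnion.2 ⟨j, ?_⟩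
    have : ¬ y j < x j := fun h => hj ⟨h0, h⟩
    exact le_antisymm h1 (not_lt.1 this)
  refine measure_mono_null hsub (measure_iUnion_null fun j => ?_)
  have : {y : Fin d → ℝ | y j = x j} ⊆ Set.univ.pi fun k => if k = j then ({x j} : Set ℝ) else Set.univ := by
    intro y hy k _
    by_cases hk : k = j
    · subst hk; simpa using hy
    · simp [hk]
  refine measure_mono_null this ?_
  rw [volume_pi_pi]
  exact Finset.prod_eq_zero (Finset.mem_univ j) (by simp)

lemma vol_inter_box_eq {d : ℕ} (Ω : Set (Fin d → ℝ)) (x : Fin d → ℝ) :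
    volume (Ω ∩ box d x) = volume (Ω ∩ Set.Icc 0 x) := by
  refine le_antisymm (measure_mono (Set.inter_subset_inter_right _ (box_subset_Icc d x))) ?_
  calc volume (Ω ∩ Set.Icc 0 x)
      ≤ volume ((Ω ∩ box d x) ∪ (Set.Icc (0 : Fin d → ℝ) x \ box d x)) := by
        refine measure_mono ?_
        intro y ⟨hy1, hy2⟩
        by_cases hb : y ∈ box d x
        · exact Or.inl ⟨hy1, hb⟩
        · exact Or.inr ⟨hy2, hb⟩
    _ ≤ volume (Ω ∩ box d x) + volume (Set.Icc (0 : Fin d → ℝ) x \ box d x) := measure_union_le _ _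
    _ = volume (Ω ∩ box d x) := by rw [null_diff]; simp

section unifety
variable {d N : ℕ} {Ω : Set (Fin d → ℝ)}

lemma unif_apply (hΩ : MeasurableSet Ω) {s : Set (Fin d → ℝ)} (hs : MeasurableSet s) :
    unif Ω s = (volume Ω)⁻¹ * volume (Ω ∩ s) := by
  rw [unif, Measure.smul_apply, smul_eq_mul, Measure.restrict_apply hs, Set.inter_comm]

lemma unif_prob (hN : 1 ≤ N) (hΩ : volume Ω = 1 / (N : ℝ≥0∞)) :
    IsProbabilityMeasure (unif Ω) := by
  constructor
  rw [unif, Measure.smul_apply, smul_eq_mul, Measure.restrict_apply MeasurableSet.univ,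
    Set.univ_inter, hΩ]
  have hN0 : (N : ℝ≥0∞) ≠ 0 := by
    simp only [ne_eq, Nat.cast_eq_zero]; omega
  rw [one_div, inv_inv]
  exact ENNReal.mul_inv_cancel hN0 (ENNReal.natCast_ne_top N)

end unifety

lemma pi_integral {N : ℕ} {α : Type*} [MeasurableSpace α] (μ : Fin N → Measure α)
    (hσ : ∀ i, SigmaFinite (μ i)) (f : Fin N → α → ℝ) :
    ∫ P, ∏ i, f i (P i) ∂Measure.pi μ = ∏ i, ∫ y, f i y ∂μ i :=
  by haveI := hσ; exact integral_fintype_prod_eq_prod f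

lemma integrable_of_bdd {α : Type*} [MeasurableSpace α] {μ : Measure α} [IsFiniteMeasure μ]
    {f : α → ℝ} (hm : AEStronglyMeasurable f μ) (C : ℝ) (h : ∀ a, |f a| ≤ C) :
    Integrable f μ :=
  ⟨hm, HasFiniteIntegral.of_bounded (C := C) (ae_of_all _ (by simpa [Real.norm_eq_abs] using h))⟩

section probint
variable {α : Type*} [MeasurableSpace α] {μ : Measure α} [IsProbabilityMeasure μ]
  {s : Set α} (hs : MeasurableSet s)

include hs

lemma integrable_chi : Integrable (fun y => s.indicator (1 : α → ℝ) y) μ :=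
  (integrable_const (1:ℝ)).indicator hs

lemma integral_c : ∫ y, (s.indicator (1 : α → ℝ) y - (μ s).toReal) ∂μ = 0 := by
  rw [integral_sub (integrable_chi hs) (integrable_const _), integral_indicator_one hs,
    integral_const]
  simp [measureReal_def]

lemma integral_c2 :
    ∫ y, (s.indicator (1 : α → ℝ) y - (μ s).toReal) *
      (s.indicator (1 : α → ℝ) y - (μ s).toReal) ∂μ
      = (μ s).toReal * (1 - (μ s).toReal) := by
  set m := (μ s).toReal with hm
  have hpt : (fun y => (s.indicator (1 : α → ℝ) y - m) * (s.indicator (1 : α → ℝ) y - m))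
      = fun y => s.indicator (1 : α → ℝ) y * (1 - 2*m) + m*m := by
    funext y
    by_cases hy : y ∈ s
    · simp only [Set.indicator_of_mem hy, Pi.one_apply]; ring
    · simp only [Set.indicator_of_notMem hy]; ring
  rw [hpt, integral_add (((integrable_chi hs).mul_const _)) (integrable_const _),
    integral_mul_const, integral_indicator_one hs, integral_const]
  simp only [measureReal_def, measure_univ, ENNReal.toReal_one, smul_eq_mul, one_mul, ← hm]
  ring

omit hs

lemma abs_c_le (y : α) : |s.indicator (1 : α → ℝ) y - (μ s).toReal| ≤ 2 := by
  have h1 : (0:ℝ) ≤ (μ s).toReal := ENNReal.toReal_nonneg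
  have h2 : (μ s).toReal ≤ 1 := by
    simpa using ENNReal.toReal_mono ENNReal.one_ne_top (prob_le_one (μ := μ) (s := s))
  rw [abs_le]
  by_cases hy : y ∈ s
  · simp only [Set.indicator_of_mem hy, Pi.one_apply]; constructor <;> linarith
  · simp only [Set.indicator_of_notMem hy]; constructor <;> linarith

end probint

lemma ncard_eq_sum {N : ℕ} (p : Fin N → Prop) [DecidablePred p] :
    ({i | p i} : Set (Fin N)).ncard = ∑ i, if p i then 1 else 0 := by
  rw [Set.ncard_eq_toFinset_card', Set.toFinset_setOf, Finset.card_filter]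

lemma measurableSet_mem_box {d : ℕ} {γ : Type*} [MeasurableSpace γ] {g h : γ → Fin d → ℝ}
    (hg : Measurable g) (hh : Measurable h) : MeasurableSet {q | g q ∈ box d (h q)} := by
  have heq : {q | g q ∈ box d (h q)} = ⋂ j, ({q | 0 ≤ g q j} ∩ {q | g q j < h q j}) := by
    ext q
    simp [box, Set.mem_pi]
  rw [heq]
  refine MeasurableSet.iInter fun j => MeasurableSet.inter ?_ ?_
  · exact measurableSet_le measurable_const ((measurable_pi_apply j).comp hg)
  · exact measurableSet_lt ((measurable_pi_apply j).comp hg) ((measurable_pi_apply j).comp hh)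

lemma measurable_V (d : ℕ) : Measurable fun x : Fin d → ℝ => (volume (box d x)).toReal := by
  have heq : (fun x : Fin d → ℝ => volume (box d x))
      = fun x => ∏ j, ENNReal.ofReal (x j) := by
    funext x
    rw [box, volume_pi_pi]
    congr 1
    funext j
    rw [Real.volume_Ico, sub_zero]
  refine ENNReal.measurable_toReal.comp ?_
  rw [heq]
  exact Finset.measurable_prod _ fun j _ =>
    ENNReal.measurable_ofReal.comp (measurable_pi_apply j)

lemma measurable_vol_inter {d : ℕ} {Ω : Set (Fin d → ℝ)} (hΩ : MeasurableSet Ω) :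
    Measurable fun x : Fin d → ℝ => volume (Ω ∩ box d x) := by
  have hB : MeasurableSet {p : (Fin d → ℝ) × (Fin d → ℝ) | p.2 ∈ Ω ∧ p.2 ∈ box d p.1} := by
    refine MeasurableSet.inter (measurable_snd hΩ) ?_
    exact measurableSet_mem_box measurable_snd measurable_fst
  have key : ∀ x : Fin d → ℝ, volume (Ω ∩ box d x)
      = ∫⁻ y, ({p : (Fin d → ℝ) × (Fin d → ℝ) | p.2 ∈ Ω ∧ p.2 ∈ box d p.1}).indicator 1 (x, y) := by
    intro x
    rw [← lintegral_indicator_one (hΩ.inter (box_meas d x))]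
    refine lintegral_congr fun y => ?_
    by_cases hy : y ∈ Ω ∩ box d x
    · rw [Set.indicator_of_mem hy, Set.indicator_of_mem (show (x,y) ∈ {p : (Fin d → ℝ) × (Fin d → ℝ) | p.2 ∈ Ω ∧ p.2 ∈ box d p.1} from ⟨hy.1, hy.2⟩)]
      rfl
    · rw [Set.indicator_of_notMem hy, Set.indicator_of_notMem (by
        intro h; exact hy ⟨h.1, h.2⟩)]
  simp_rw [key]
  exact Measurable.lintegral_prod_right' (measurable_const.indicator hB)

noncomputable def mfun {d : ℕ} (Ω : Set (Fin d → ℝ)) (x : Fin d → ℝ) : ℝ :=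
  (unif Ω (box d x)).toReal

/-- For an equivolume measurable partition `(Ω_1,…,Ω_N)` of `[0,1]^d`, with
`q_i(x) = N·|Ω_i ∩ [0,x]|`, the stratified sample satisfies
`E L2^2 = (1/N²) ∑_i ∫ q_i(x)(1 − q_i(x)) dx`. -/
theorem stmt7 (d N : ℕ) (hN : 1 ≤ N) (Ω : Fin N → Set (Fin d → ℝ))
    (hmeas : ∀ i, MeasurableSet (Ω i))
    (hcover : (⋃ i, Ω i) = Set.Icc (0 : Fin d → ℝ) 1)
    (hdisj : ∀ i j, i ≠ j → volume (Ω i ∩ Ω j) = 0)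
    (hequi : ∀ i, volume (Ω i) = 1 / (N : ℝ≥0∞)) :
    (∫ P, disc2 d N P ∂(Measure.pi fun i => unif (Ω i)))
      = (1 / (N : ℝ) ^ 2) * ∑ i, ∫ x in Set.Icc (0 : Fin d → ℝ) 1,
          ((N : ℝ) * (volume (Ω i ∩ Set.Icc 0 x)).toReal)
            * (1 - (N : ℝ) * (volume (Ω i ∩ Set.Icc 0 x)).toReal) := by
  classical
  haveI hprob : ∀ i, IsProbabilityMeasure (unif (Ω i)) := fun i => unif_prob hN (hequi i)
  set π := Measure.pi fun i => unif (Ω i) with hπ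
  haveI : IsProbabilityMeasure π := Measure.pi.instIsProbabilityMeasure _
  have hN0 : (N : ℝ) ≠ 0 := Nat.cast_ne_zero.2 (by omega)
  have hN0' : (N : ℝ≥0∞) ≠ 0 := Nat.cast_ne_zero.2 (by omega)
  -- basic facts about mfun
  have hfinΩ : ∀ i, volume (Ω i) ≠ ⊤ := by
    intro i; rw [hequi i, one_div]; exact ENNReal.inv_ne_top.2 hN0'
  have hfin : ∀ i (x : Fin d → ℝ), volume (Ω i ∩ box d x) ≠ ⊤ := fun i x =>
    ne_top_of_le_ne_top (hfinΩ i) (measure_mono Set.inter_subset_left)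
  have hm_box : ∀ i (x : Fin d → ℝ),
      mfun (Ω i) x = (N : ℝ) * (volume (Ω i ∩ box d x)).toReal := by
    intro i x
    rw [mfun, unif_apply (hmeas i) (box_meas d x), hequi i, one_div, inv_inv,
      ENNReal.toReal_mul]
    simp
  have hm_Icc : ∀ i (x : Fin d → ℝ),
      mfun (Ω i) x = (N : ℝ) * (volume (Ω i ∩ Set.Icc 0 x)).toReal := by
    intro i x; rw [hm_box i x, vol_inter_box_eq]
  have hm_meas : ∀ i, Measurable (mfun (Ω i)) := by
    intro i
    have : mfun (Ω i) = fun x => (N : ℝ) * (volume (Ω i ∩ box d x)).toReal :=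
      funext fun x => hm_box i x
    rw [this]
    exact (ENNReal.measurable_toReal.comp (measurable_vol_inter (hmeas i))).const_mul _
  have hm0 : ∀ i (x : Fin d → ℝ), 0 ≤ mfun (Ω i) x := fun i x => ENNReal.toReal_nonneg
  have hm1 : ∀ i (x : Fin d → ℝ), mfun (Ω i) x ≤ 1 := by
    intro i x
    have h : unif (Ω i) (box d x) ≤ 1 := prob_le_one
    calc mfun (Ω i) x = (unif (Ω i) (box d x)).toReal := rfl
      _ ≤ (1 : ℝ≥0∞).toReal := ENNReal.toReal_mono ENNReal.one_ne_top h
      _ = 1 := by simp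
  -- the mean identity : V x = (∑ m)/N for x in the unit cube
  have hsum : ∀ x ∈ Set.Icc (0 : Fin d → ℝ) 1,
      (volume (box d x)).toReal = (∑ i, mfun (Ω i) x) / N := by
    intro x hx
    have hUnion : ⋃ i, (Ω i ∩ box d x) = box d x := by
      apply Set.Subset.antisymm (Set.iUnion_subset fun i => Set.inter_subset_right)
      intro y hy
      have hy' : y ∈ ⋃ i, Ω i := by rw [hcover]; exact box_subset_unit hx hy
      obtain ⟨i, hi⟩ := Set.mem_iUnion.1 hy'
      exact Set.mem_iUnion.2 ⟨i, hi, hy⟩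
    have hvol : volume (box d x) = ∑ i, volume (Ω i ∩ box d x) := by
      conv_lhs => rw [← hUnion]
      rw [measure_iUnion₀ ?_ (fun i => ((hmeas i).inter (box_meas d x)).nullMeasurableSet),
        tsum_fintype]
      intro i j hij
      refine measure_mono_null ?_ (hdisj i j hij)
      intro y hy
      exact ⟨hy.1.1, hy.2.1⟩
    have hsum' : ∑ i, mfun (Ω i) x = N * (volume (box d x)).toReal := by
      rw [hvol, ENNReal.toReal_sum (fun i _ => hfin i x), Finset.mul_sum]
      exact Finset.sum_congr rfl fun i _ => hm_box i x
    rw [eq_div_iff hN0]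
    linarith [hsum']
  -- the inner (fixed x) computation
  have hinner : ∀ x ∈ Set.Icc (0 : Fin d → ℝ) 1,
      (∫ P, ((Set.ncard {i | P i ∈ box d x} : ℝ) / N - (volume (box d x)).toReal) ^ 2 ∂π)
        = ((N : ℝ) ^ 2)⁻¹ * ∑ i, mfun (Ω i) x * (1 - mfun (Ω i) x) := by
    intro x hx
    set s := box d x with hsdef
    have hs : MeasurableSet s := box_meas d x
    set c : Fin N → (Fin d → ℝ) → ℝ := fun i y => s.indicator 1 y - mfun (Ω i) x with hc
    have hcm : ∀ i, mfun (Ω i) x = ((unif (Ω i)) s).toReal := fun i => rfl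
    have hfun : (fun P : Fin N → Fin d → ℝ =>
        ((Set.ncard {i | P i ∈ box d x} : ℝ) / N - (volume (box d x)).toReal) ^ 2)
        = fun P => ((N : ℝ) ^ 2)⁻¹ * ∑ i, ∑ j, c i (P i) * c j (P j) := by
      funext P
      have h1 : (Set.ncard {i | P i ∈ box d x} : ℝ) = ∑ i, s.indicator 1 (P i) := by
        rw [ncard_eq_sum (fun i => P i ∈ box d x), Nat.cast_sum]
        exact Finset.sum_congr rfl fun i _ => by
          by_cases h : P i ∈ box d x <;> simp [h, hsdef]
      rw [h1, hsum x hx, div_sub_div_same, ← Finset.sum_sub_distrib, div_pow,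
        sq (∑ i, c i (P i)), Finset.sum_mul_sum, div_eq_inv_mul]
    have hc_meas : ∀ i, Measurable (c i) := fun i =>
      (measurable_const.indicator hs).sub measurable_const
    have hc_bdd : ∀ i y, |c i y| ≤ 2 := fun i y => abs_c_le (μ := unif (Ω i)) y
    have hint : ∀ i j, Integrable (fun P : Fin N → Fin d → ℝ => c i (P i) * c j (P j)) π := by
      intro i j
      refine integrable_of_bdd ?_ 4 ?_
      · exact (((hc_meas i).comp (measurable_pi_apply i)).mul
          ((hc_meas j).comp (measurable_pi_apply j))).aestronglyMeasurable
      · intro P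
        rw [abs_mul]
        calc |c i (P i)| * |c j (P j)| ≤ 2 * 2 :=
              mul_le_mul (hc_bdd i (P i)) (hc_bdd j (P j)) (abs_nonneg _) (by norm_num)
          _ = 4 := by norm_num
    have hterm : ∀ i j, (∫ P, c i (P i) * c j (P j) ∂π)
        = if i = j then mfun (Ω i) x * (1 - mfun (Ω i) x) else 0 := by
      intro i j
      have hprod : (fun P : Fin N → Fin d → ℝ => c i (P i) * c j (P j))
          = fun P => ∏ k, ((if k = i then c i (P k) else 1) * (if k = j then c j (P k) else 1)) := by
        funext P
        rw [Finset.prod_mul_distrib]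
        simp [Finset.prod_ite_eq']
      rw [hprod]
      rw [pi_integral (fun k => unif (Ω k)) (fun k => inferInstance)
        (fun k y => (if k = i then c i y else 1) * (if k = j then c j y else 1))]
      by_cases hij : i = j
      · subst hij
        have hfac : ∀ k, (∫ y, (if k = i then c i y else 1) * (if k = i then c i y else 1)
            ∂(unif (Ω k))) = if k = i then mfun (Ω i) x * (1 - mfun (Ω i) x) else 1 := by
          intro k
          by_cases hk : k = i
          · subst hk
            simp only [if_pos rfl]
            exact integral_c2 hs
          · simp [hk]
        rw [Finset.prod_congr rfl fun k _ => hfac k]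
        simp [Finset.prod_ite_eq']
      · rw [if_neg hij]
        refine Finset.prod_eq_zero (Finset.mem_univ i) ?_
        have : (∫ y, (if i = i then c i y else 1) * (if i = j then c j y else 1)
            ∂(unif (Ω i))) = ∫ y, c i y ∂(unif (Ω i)) := by
          simp [hij]
        rw [this]
        exact integral_c hs
    rw [hfun, integral_const_mul,
      integral_finset_sum _ (fun i _ => integrable_finset_sum _ fun j _ => hint i j)]
    congr 1
    rw [Finset.sum_congr rfl fun i _ =>
      integral_finset_sum _ (fun j _ => hint i j)]
    refine Finset.sum_congr rfl fun i _ => ?_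
    rw [Finset.sum_congr rfl fun j _ => hterm i j]
    simp [Finset.sum_ite_eq]
  -- Fubini swap
  have hncard : ∀ (P : Fin N → Fin d → ℝ) (x : Fin d → ℝ),
      (Set.ncard {i | P i ∈ box d x} : ℝ)
        = ∑ i, (box d x).indicator (1 : (Fin d → ℝ) → ℝ) (P i) := by
    intro P x
    rw [ncard_eq_sum (fun i => P i ∈ box d x), Nat.cast_sum]
    exact Finset.sum_congr rfl fun i _ => by by_cases h : P i ∈ box d x <;> simp [h]
  have hjoint_meas : Measurable (Function.uncurry fun (P : Fin N → Fin d → ℝ) (x : Fin d → ℝ) =>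
      ((Set.ncard {i | P i ∈ box d x} : ℝ) / N - (volume (box d x)).toReal) ^ 2) := by
    have heq : (Function.uncurry fun (P : Fin N → Fin d → ℝ) (x : Fin d → ℝ) =>
        ((Set.ncard {i | P i ∈ box d x} : ℝ) / N - (volume (box d x)).toReal) ^ 2)
        = fun q : (Fin N → Fin d → ℝ) × (Fin d → ℝ) =>
          ((∑ i, ({q' : (Fin N → Fin d → ℝ) × (Fin d → ℝ) | q'.1 i ∈ box d q'.2}).indicator
              (1 : ((Fin N → Fin d → ℝ) × (Fin d → ℝ)) → ℝ) q) / N - (volume (box d q.2)).toReal) ^ 2 := by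
      funext q
      show ((Set.ncard {i | q.1 i ∈ box d q.2} : ℝ) / N - (volume (box d q.2)).toReal) ^ 2 = _
      rw [hncard q.1 q.2]
      have hsumeq : (∑ i, (box d q.2).indicator (1 : (Fin d → ℝ) → ℝ) (q.1 i))
          = ∑ i, ({q' : (Fin N → Fin d → ℝ) × (Fin d → ℝ) | q'.1 i ∈ box d q'.2}).indicator
              (1 : ((Fin N → Fin d → ℝ) × (Fin d → ℝ)) → ℝ) q :=
        Finset.sum_congr rfl fun i _ => by by_cases h : q.1 i ∈ box d q.2 <;> simp [h]
      rw [hsumeq]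
    rw [heq]
    have h1 : ∀ i, Measurable fun q : (Fin N → Fin d → ℝ) × (Fin d → ℝ) =>
        ({q' : (Fin N → Fin d → ℝ) × (Fin d → ℝ) | q'.1 i ∈ box d q'.2}).indicator
          (1 : ((Fin N → Fin d → ℝ) × (Fin d → ℝ)) → ℝ) q := fun i =>
      measurable_const.indicator (measurableSet_mem_box
        ((measurable_pi_apply i).comp measurable_fst) measurable_snd)
    exact (((Finset.measurable_sum _ (fun i _ => h1 i)).div_const _).sub
      ((measurable_V d).comp measurable_snd)).pow_const 2
  have hIccVol : volume (Set.Icc (0 : Fin d → ℝ) 1) = 1 := by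
    rw [Real.volume_Icc_pi]
    simp
  haveI : IsFiniteMeasure (volume.restrict (Set.Icc (0 : Fin d → ℝ) 1)) := by
    constructor
    rw [Measure.restrict_apply_univ, hIccVol]
    exact ENNReal.one_lt_top
  have hbound : ∀ᵐ q ∂(π.prod (volume.restrict (Set.Icc (0 : Fin d → ℝ) 1))),
      ‖(Function.uncurry fun (P : Fin N → Fin d → ℝ) (x : Fin d → ℝ) =>
        ((Set.ncard {i | P i ∈ box d x} : ℝ) / N - (volume (box d x)).toReal) ^ 2) q‖ ≤ 4 := by
    have hps : π.prod (volume.restrict (Set.Icc (0 : Fin d → ℝ) 1))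
        = (π.prod volume).restrict (Set.univ ×ˢ Set.Icc 0 1) := by
      rw [← Measure.prod_restrict, Measure.restrict_univ]
    rw [hps]
    filter_upwards [ae_restrict_mem (MeasurableSet.univ.prod measurableSet_Icc)] with q hq
    have hq2 : q.2 ∈ Set.Icc (0 : Fin d → ℝ) 1 := hq.2
    have hS0 : (0 : ℝ) ≤ (Set.ncard {i | q.1 i ∈ box d q.2} : ℝ) := Nat.cast_nonneg _
    have hS1 : (Set.ncard {i | q.1 i ∈ box d q.2} : ℝ) ≤ N := by
      have h := Set.ncard_le_ncard (Set.subset_univ {i | q.1 i ∈ box d q.2}) Set.finite_univ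
      rw [Set.ncard_univ] at h
      exact_mod_cast by simpa using h
    have hNpos : (0 : ℝ) < N := by exact_mod_cast Nat.pos_of_ne_zero (by omega)
    have hV0 : (0 : ℝ) ≤ (volume (box d q.2)).toReal := ENNReal.toReal_nonneg
    have hV1 : (volume (box d q.2)).toReal ≤ 1 := by
      have hle : volume (box d q.2) ≤ 1 := by
        rw [← hIccVol]
        exact measure_mono (box_subset_unit hq2)
      simpa using ENNReal.toReal_mono ENNReal.one_ne_top hle
    have hdiv1 : (Set.ncard {i | q.1 i ∈ box d q.2} : ℝ) / N ≤ 1 := by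
      rw [div_le_one hNpos]; exact hS1
    have hdiv0 : (0 : ℝ) ≤ (Set.ncard {i | q.1 i ∈ box d q.2} : ℝ) / N :=
      div_nonneg hS0 hNpos.le
    show ‖((Set.ncard {i | q.1 i ∈ box d q.2} : ℝ) / N - (volume (box d q.2)).toReal) ^ 2‖ ≤ 4
    rw [Real.norm_eq_abs, abs_of_nonneg (sq_nonneg _)]
    nlinarith
  have hInt : Integrable (Function.uncurry fun (P : Fin N → Fin d → ℝ) (x : Fin d → ℝ) =>
      ((Set.ncard {i | P i ∈ box d x} : ℝ) / N - (volume (box d x)).toReal) ^ 2)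
      (π.prod (volume.restrict (Set.Icc (0 : Fin d → ℝ) 1))) :=
    ⟨hjoint_meas.aestronglyMeasurable, HasFiniteIntegral.of_bounded hbound⟩
  have hswap := integral_integral_swap hInt
  calc (∫ P, disc2 d N P ∂π)
      = ∫ x in Set.Icc (0 : Fin d → ℝ) 1, (∫ P, ((Set.ncard {i | P i ∈ box d x} : ℝ) / N
          - (volume (box d x)).toReal) ^ 2 ∂π) := by
        simp only [disc2]
        exact hswap
    _ = ∫ x in Set.Icc (0 : Fin d → ℝ) 1,
          ((N : ℝ) ^ 2)⁻¹ * ∑ i, mfun (Ω i) x * (1 - mfun (Ω i) x) :=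
        setIntegral_congr_fun measurableSet_Icc hinner
    _ = ((N : ℝ) ^ 2)⁻¹ * ∑ i, ∫ x in Set.Icc (0 : Fin d → ℝ) 1,
          mfun (Ω i) x * (1 - mfun (Ω i) x) := by
        rw [integral_const_mul]
        congr 1
        refine integral_finset_sum _ fun i _ => ?_
        refine integrable_of_bdd ?_ 1 ?_
        · exact ((hm_meas i).mul (measurable_const.sub (hm_meas i))).aestronglyMeasurable
        · intro y
          have h0 := hm0 i y
          have h1 := hm1 i y
          rw [abs_le]
          constructor <;> nlinarith
    _ = (1 / (N : ℝ) ^ 2) * ∑ i, ∫ x in Set.Icc (0 : Fin d → ℝ) 1,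
          ((N : ℝ) * (volume (Ω i ∩ Set.Icc 0 x)).toReal)
            * (1 - (N : ℝ) * (volume (Ω i ∩ Set.Icc 0 x)).toReal) := by
        rw [one_div]
        congr 1
        refine Finset.sum_congr rfl fun i _ => ?_
        refine setIntegral_congr_fun measurableSet_Icc fun x _ => ?_
        rw [hm_Icc i x]
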